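/- arXiv:1101.2496 — 2 statements merged into one kernel-verified Lean document; each statement's English description precedes it below -/
import Mathlib

section
/- Let d ∈ ℕ and α, β > 0. There exists a constant C > 0, depending only on d, α, β (and not on the simplex), such that for every d-simplex T ⊂ ℝ^d of unit volume, E_{∞;α,β}(T) ≥ C · (diam T)², where diam T is the Euclidean diameter of T. -/
open MeasureTheory Metric Set

/-!
The error `e = Q - u` of any affine `u` has second difference
`e x + e y - 2 e ((x + y) / 2) = |x - y|² / 2` along any segment, since `u` has none.
Taking `x, y` a diametral pair of `T`, one of `e x`, `e y`, `-e ((x + y) / 2)` is at least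
`(diam T)² / 8`, and the asymmetric loss of that value is at least `min α β / 8 · (diam T)²`.
-/

/-- The asymmetric uniform error of best approximation of `Q(x) = ∑ xⱼ²` by affine
functions `x ↦ ⟪a, x⟫ + c` on the set `T ⊆ ℝ^d`. -/
noncomputable def EinfAB (d : ℕ) (α β : ℝ) (T : Set (EuclideanSpace ℝ (Fin d))) : ℝ :=
  ⨅ (a : EuclideanSpace ℝ (Fin d)) (c : ℝ),
    ⨆ x : T,
      (α * max ((∑ j, x.1 j ^ 2) - ((inner ℝ a x.1 : ℝ) + c)) 0 +
        β * max (-((∑ j, x.1 j ^ 2) - ((inner ℝ a x.1 : ℝ) + c))) 0)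

def asymLoss (α β t : ℝ) : ℝ := α * max t 0 + β * max (-t) 0

theorem min_mul_abs_le_asymLoss (α β t : ℝ) :
    min α β * |t| ≤ asymLoss α β t := by
  unfold asymLoss
  rcases le_total 0 t with ht | ht
  · rw [abs_of_nonneg ht, max_eq_left ht, max_eq_right (neg_nonpos.mpr ht)]
    nlinarith [min_le_left α β]
  · rw [abs_of_nonpos ht, max_eq_right ht, max_eq_left (neg_nonneg.mpr ht)]
    nlinarith [min_le_right α β]

theorem exists_le_asymLoss_of_second_difference {α β : ℝ} (hα : 0 ≤ α) (hβ : 0 ≤ β)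
    (s t u : ℝ) :
    ∃ r ∈ ({s, t, u} : Set ℝ), min α β * ((s + t - 2 * u) / 4) ≤ asymLoss α β r := by
  by_contra! h
  simp only [mem_insert_iff, mem_singleton_iff, forall_eq_or_imp, forall_eq] at h
  obtain ⟨hs, ht, hu⟩ := h
  have hm : 0 ≤ min α β := le_min hα hβ
  have hsum : s + t - 2 * u ≤ |s| + |t| + 2 * |u| := by
    linarith [le_abs_self s, le_abs_self t, neg_abs_le u]
  have := mul_le_mul_of_nonneg_left hsum hm
  linarith [min_mul_abs_le_asymLoss α β s, min_mul_abs_le_asymLoss α β t,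
    min_mul_abs_le_asymLoss α β u]

section InnerProductSpace

variable {E : Type*} [NormedAddCommGroup E] [InnerProductSpace ℝ E]

theorem norm_sq_sub_affine_second_difference (a x y : E) (c : ℝ) :
    (‖x‖ ^ 2 - (inner ℝ a x + c)) + (‖y‖ ^ 2 - (inner ℝ a y + c))
      - 2 * (‖midpoint ℝ x y‖ ^ 2 - (inner ℝ a (midpoint ℝ x y) + c)) = ‖x - y‖ ^ 2 / 2 := by
  have hpar := parallelogram_law_with_norm ℝ x y
  rw [midpoint_eq_smul_add, invOf_eq_inv, inner_smul_right, inner_add_right, norm_smul,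
    mul_pow, norm_inv, Real.norm_ofNat]
  linear_combination (-1 / 2 : ℝ) * hpar

theorem Convex.exists_le_asymLoss_norm_sq_sub_affine {T : Set E} (hT : Convex ℝ T)
    {x y : E} (hx : x ∈ T) (hy : y ∈ T) {α β : ℝ} (hα : 0 ≤ α) (hβ : 0 ≤ β) (a : E) (c : ℝ) :
    ∃ p ∈ T, min α β / 8 * ‖x - y‖ ^ 2 ≤ asymLoss α β (‖p‖ ^ 2 - (inner ℝ a p + c)) := by
  set e : E → ℝ := fun z => ‖z‖ ^ 2 - (inner ℝ a z + c)
  have hsd : e x + e y - 2 * e (midpoint ℝ x y) = ‖x - y‖ ^ 2 / 2 :=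
    norm_sq_sub_affine_second_difference a x y c
  obtain ⟨r, hr, hle⟩ :=
    exists_le_asymLoss_of_second_difference hα hβ (e x) (e y) (e (midpoint ℝ x y))
  have hbound : min α β / 8 * ‖x - y‖ ^ 2 ≤ asymLoss α β r := by
    rw [hsd] at hle
    linarith
  have hmid : midpoint ℝ x y ∈ T := hT.segment_subset hx hy (midpoint_mem_segment x y)
  simp only [mem_insert_iff, mem_singleton_iff] at hr
  rcases hr with rfl | rfl | rfl
  exacts [⟨x, hx, hbound⟩, ⟨y, hy, hbound⟩, ⟨_, hmid, hbound⟩]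

end InnerProductSpace

theorem IsCompact.exists_dist_eq_diam {X : Type*} [MetricSpace X] {T : Set X}
    (hT : IsCompact T) (hne : T.Nonempty) : ∃ x ∈ T, ∃ y ∈ T, dist x y = diam T := by
  obtain ⟨⟨x, y⟩, ⟨hx, hy⟩, hmax⟩ :=
    (hT.prod hT).exists_isMaxOn (hne.prod hne) continuous_dist.continuousOn
  refine ⟨x, hx, y, hy, le_antisymm (dist_le_diam_of_mem hT.isBounded hx hy)
    (diam_le_of_forall_dist_le dist_nonneg fun p hp q hq => hmax (mk_mem_prod hp hq))⟩

theorem continuous_asymLoss (α β : ℝ) : Continuous (asymLoss α β) := by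
  unfold asymLoss
  fun_prop

theorem EinfAB_eq_iInf_iSup_asymLoss (d : ℕ) (α β : ℝ) (T : Set (EuclideanSpace ℝ (Fin d))) :
    EinfAB d α β T = ⨅ (a) (c : ℝ), ⨆ x : T, asymLoss α β (‖x.1‖ ^ 2 - (inner ℝ a x.1 + c)) := by
  simp only [EinfAB, asymLoss, EuclideanSpace.real_norm_sq_eq]

theorem le_EinfAB_of_forall_exists_le_asymLoss {d : ℕ} {α β B : ℝ}
    {T : Set (EuclideanSpace ℝ (Fin d))} (hT : IsCompact T)
    (h : ∀ a c, ∃ p ∈ T, B ≤ asymLoss α β (‖p‖ ^ 2 - (inner ℝ a p + c))) :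
    B ≤ EinfAB d α β T := by
  rw [EinfAB_eq_iInf_iSup_asymLoss]
  refine le_ciInf fun a => le_ciInf fun c => ?_
  obtain ⟨p, hp, hB⟩ := h a c
  have : CompactSpace T := isCompact_iff_compactSpace.mp hT
  have hbdd : BddAbove (range fun x : T => asymLoss α β (‖x.1‖ ^ 2 - (inner ℝ a x.1 + c))) :=
    (isCompact_range ((continuous_asymLoss α β).comp (by fun_prop))).bddAbove
  exact hB.trans (le_ciSup hbdd ⟨p, hp⟩)

theorem asymmetric_uniform_error_lower_bound_diam_general
    (d : ℕ) (α β : ℝ) (hα : 0 < α) (hβ : 0 < β) :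
    ∃ C : ℝ, 0 < C ∧
      ∀ v : Fin (d + 1) → EuclideanSpace ℝ (Fin d),
        AffineIndependent ℝ v →
        volume (convexHull ℝ (Set.range v)) = 1 →
        EinfAB d α β (convexHull ℝ (Set.range v)) ≥
          C * (Metric.diam (convexHull ℝ (Set.range v))) ^ 2 := by
  refine ⟨min α β / 8, by positivity, fun v _ _ => ?_⟩
  have hcompact : IsCompact (convexHull ℝ (range v)) :=
    (finite_range v).isCompact_convexHull ℝ
  obtain ⟨x, hx, y, hy, hxy⟩ :=
    hcompact.exists_dist_eq_diam (convexHull_nonempty_iff.mpr (range_nonempty v))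
  rw [← hxy, dist_eq_norm]
  exact le_EinfAB_of_forall_exists_le_asymLoss hcompact fun a c =>
    (convex_convexHull ℝ _).exists_le_asymLoss_norm_sq_sub_affine hx hy hα.le hβ.le a c

/-- There is a constant `C > 0`, depending only on `d`, `α`, `β`, such that the
asymmetric uniform error of best affine approximation of `Q` on any unit-volume
`d`-simplex `T` is at least `C * (diam T)²`. -/
theorem asymmetric_uniform_error_lower_bound_diam
    (d : ℕ) (hd : 0 < d) (α β : ℝ) (hα : 0 < α) (hβ : 0 < β) :
    ∃ C : ℝ, 0 < C ∧
      ∀ v : Fin (d + 1) → EuclideanSpace ℝ (Fin d),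
        AffineIndependent ℝ v →
        volume (convexHull ℝ (Set.range v)) = 1 →
        EinfAB d α β (convexHull ℝ (Set.range v)) ≥
          C * (Metric.diam (convexHull ℝ (Set.range v))) ^ 2 :=
  asymmetric_uniform_error_lower_bound_diam_general d α β hα hβ
end

section
/- Let d ∈ ℕ, 1 ≤ p < ∞, and let T ⊂ ℝ^d be a d-simplex. For x₀ ∈ ℝ^d let u_{x₀}(x) = 2⟨x₀, x⟩ − ‖x₀‖² be the tangent affine function to Q at x₀ (so that u_{x₀}(x) ≤ Q(x) for all x ∈ ℝ^d). Then inf{ (∫_T (Q(x) − u(x))^p dx)^{1/p} : u affine, u(x) ≤ Q(x) for all x ∈ T } = inf{ (∫_T (Q(x) − u_{x₀}(x))^p dx)^{1/p} : x₀ ∈ ℝ^d }; i.e., the best one-sided L_p-approximation of Q from below by affine functions on T coincides with the error of tangential interpolation of Q on T. -/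
/-!
If `u x = ⟪a, x⟫ + c` lies below `‖x‖²` on a compact convex set `K`, let `x₀` be the point of `K`
nearest to `a / 2`. The variational inequality `⟪a / 2 - x₀, x - x₀⟫ ≤ 0` on `K`, added to
`u x₀ ≤ ‖x₀‖²`, says that the tangent `2⟪x₀, x⟫ - ‖x₀‖²` lies between `u` and `‖x‖²` on `K`, so its
`L_p` error is no larger. Tangents are themselves admissible, so the two infima agree.
-/

open MeasureTheory Set

open scoped RealInnerProductSpace

section

variable {E : Type*} [NormedAddCommGroup E] [InnerProductSpace ℝ E]

theorem two_inner_sub_norm_sq_le_norm_sq (x₀ x : E) : 2 * ⟪x₀, x⟫ - ‖x₀‖ ^ 2 ≤ ‖x‖ ^ 2 := by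
  nlinarith [sq_nonneg ‖x - x₀‖, norm_sub_sq_real x x₀, real_inner_comm x x₀]

theorem exists_tangent_between_of_affine_le_norm_sq {K : Set E} (hK : IsComplete K)
    (hKc : Convex ℝ K) (hKne : K.Nonempty) {a : E} {c : ℝ}
    (hle : ∀ x ∈ K, ⟪a, x⟫ + c ≤ ‖x‖ ^ 2) :
    ∃ x₀ ∈ K, ∀ x ∈ K, ⟪a, x⟫ + c ≤ 2 * ⟪x₀, x⟫ - ‖x₀‖ ^ 2 := by
  obtain ⟨x₀, hx₀, hproj⟩ := exists_norm_eq_iInf_of_complete_convex hKne hK hKc ((1 / 2 : ℝ) • a)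
  rw [norm_eq_iInf_iff_real_inner_le_zero hKc hx₀] at hproj
  refine ⟨x₀, hx₀, fun x hx => ?_⟩
  have hvar := hproj x hx
  rw [inner_sub_left, inner_sub_right, inner_sub_right, real_inner_smul_left,
    real_inner_smul_left, real_inner_self_eq_norm_sq] at hvar
  linarith [hle x₀ hx₀]

end

theorem rpow_setIntegral_rpow_le_of_le {α : Type*} [MeasurableSpace α] {μ : Measure α}
    {s : Set α} (hs : MeasurableSet s) {f g : α → ℝ} {p : ℝ} (hp : 0 ≤ p)
    (hf : ∀ x ∈ s, 0 ≤ f x) (hfg : ∀ x ∈ s, f x ≤ g x)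
    (hg : IntegrableOn (fun x => g x ^ p) s μ) :
    (∫ x in s, f x ^ p ∂μ) ^ (1 / p) ≤ (∫ x in s, g x ^ p ∂μ) ^ (1 / p) := by
  have hfp : ∀ x ∈ s, 0 ≤ f x ^ p := fun x hx => Real.rpow_nonneg (hf x hx) p
  refine Real.rpow_le_rpow (setIntegral_nonneg hs hfp) ?_ (by positivity)
  refine integral_mono_of_nonneg (ae_restrict_of_forall_mem hs hfp) hg
    (ae_restrict_of_forall_mem hs fun x hx => ?_)
  exact Real.rpow_le_rpow (hf x hx) (hfg x hx) hp

section

variable {E : Type*} [NormedAddCommGroup E] [InnerProductSpace ℝ E] [MeasurableSpace E]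
  [BorelSpace E]

theorem sInf_affine_below_error_eq_iInf_tangent_error (μ : Measure E)
    [IsFiniteMeasureOnCompacts μ] {K : Set E} (hK : IsCompact K) (hKc : Convex ℝ K)
    (hKne : K.Nonempty) {p : ℝ} (hp : 0 ≤ p) :
    sInf {r : ℝ | ∃ (a : E) (c : ℝ), (∀ x ∈ K, ⟪a, x⟫ + c ≤ ‖x‖ ^ 2) ∧
      r = (∫ x in K, (‖x‖ ^ 2 - (⟪a, x⟫ + c)) ^ p ∂μ) ^ (1 / p)} =
    ⨅ x₀ : E, (∫ x in K, (‖x‖ ^ 2 - (2 * ⟪x₀, x⟫ - ‖x₀‖ ^ 2)) ^ p ∂μ) ^ (1 / p) := by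
  have tangent_eq (x₀ x : E) : 2 * ⟪x₀, x⟫ - ‖x₀‖ ^ 2 = ⟪(2 : ℝ) • x₀, x⟫ + -‖x₀‖ ^ 2 := by
    rw [real_inner_smul_left]; ring
  refine csInf_eq_csInf_of_forall_exists_le ?_ ?_
  · rintro _ ⟨a, c, hle, rfl⟩
    obtain ⟨x₀, -, hx₀⟩ :=
      exists_tangent_between_of_affine_le_norm_sq hK.isComplete hKc hKne hle
    refine ⟨_, mem_range_self x₀, rpow_setIntegral_rpow_le_of_le hK.measurableSet hp
      (fun x _ => sub_nonneg.2 (two_inner_sub_norm_sq_le_norm_sq x₀ x))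
      (fun x hx => sub_le_sub_left (hx₀ x hx) _) ?_⟩
    refine ContinuousOn.integrableOn_compact hK (Continuous.continuousOn ?_)
    exact Continuous.rpow_const (by fun_prop) fun _ => Or.inr hp
  · rintro _ ⟨x₀, rfl⟩
    refine ⟨_, ⟨(2 : ℝ) • x₀, -‖x₀‖ ^ 2, fun x _ => ?_, ?_⟩, le_rfl⟩
    · rw [← tangent_eq]; exact two_inner_sub_norm_sq_le_norm_sq x₀ x
    · simp_rw [tangent_eq]

end

theorem tangential_interpolation_is_best_onesided_below_general
    (d : ℕ) (p : ℝ) (hp : 1 ≤ p)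
    (v : Fin (d + 1) → EuclideanSpace ℝ (Fin d)) :
    sInf {r : ℝ | ∃ (a : EuclideanSpace ℝ (Fin d)) (c : ℝ),
      (∀ x ∈ convexHull ℝ (Set.range v), (inner ℝ a x : ℝ) + c ≤ ∑ j, x j ^ 2) ∧
      r = (∫ x in convexHull ℝ (Set.range v),
        ((∑ j, x j ^ 2) - ((inner ℝ a x : ℝ) + c)) ^ p) ^ (1 / p)} =
    ⨅ x₀ : EuclideanSpace ℝ (Fin d),
      (∫ x in convexHull ℝ (Set.range v),
        ((∑ j, x j ^ 2) - (2 * (inner ℝ x₀ x : ℝ) - ‖x₀‖ ^ 2)) ^ p) ^ (1 / p) := by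
  simp_rw [← EuclideanSpace.real_norm_sq_eq]
  exact sInf_affine_below_error_eq_iInf_tangent_error volume
    ((finite_range v).isCompact_convexHull ℝ) (convex_convexHull ℝ _)
    ⟨v 0, subset_convexHull ℝ _ (mem_range_self 0)⟩ (by linarith)

/-- The best one-sided `L_p`-approximation of `Q(x) = ∑ xⱼ² = ‖x‖²` from below by affine
functions on a `d`-simplex coincides with the error of tangential interpolation of `Q`,
i.e. with the infimum over tangency points `x₀` of the `L_p`-deviation of the tangent
affine function `x ↦ 2⟪x₀, x⟫ − ‖x₀‖²` from `Q`. -/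
theorem tangential_interpolation_is_best_onesided_below
    (d : ℕ) (hd : 0 < d) (p : ℝ) (hp : 1 ≤ p)
    (v : Fin (d + 1) → EuclideanSpace ℝ (Fin d))
    (hind : AffineIndependent ℝ v) :
    sInf {r : ℝ | ∃ (a : EuclideanSpace ℝ (Fin d)) (c : ℝ),
      (∀ x ∈ convexHull ℝ (Set.range v), (inner ℝ a x : ℝ) + c ≤ ∑ j, x j ^ 2) ∧
      r = (∫ x in convexHull ℝ (Set.range v),
        ((∑ j, x j ^ 2) - ((inner ℝ a x : ℝ) + c)) ^ p) ^ (1 / p)} =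
    ⨅ x₀ : EuclideanSpace ℝ (Fin d),
      (∫ x in convexHull ℝ (Set.range v),
        ((∑ j, x j ^ 2) - (2 * (inner ℝ x₀ x : ℝ) - ‖x₀‖ ^ 2)) ^ p) ^ (1 / p) :=
  tangential_interpolation_is_best_onesided_below_general d p hp v
end
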